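/- If T is an induced SPN of a complete and decomposable SPN S over Boolean variables X_1,...,X_N whose root has scope {X_1,...,X_N}, then for every input x in {0,1}^N the value computed by T equals (prod over edges (v_i,v_j) in T_E with v_i a sum node of w_{ij}) times (prod over n = 1,...,N of I^{(T)}_n(x_n)), where I^{(T)}_n is the unique indicator over X_n appearing among the leaves of T; that is, the network polynomial of T is a single monomial in the sum-edge weights of T times a product of exactly one indicator variable per variable. -/
import Mathlib


inductive NodeKind
  | sum
  | prod
  | leaf
deriving DecidableEq

/-- A sum-product network over `N` Boolean variables, with node set `V`:
a rooted DAG (acyclicity witnessed by a rank function) whose leaves are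
indicator variables and whose internal nodes are sum or product nodes. -/
structure SPN (V : Type) [Fintype V] [DecidableEq V] (N : ℕ) where
  root : V
  kind : V → NodeKind
  children : V → Finset V
  leaf_children : ∀ v, kind v = NodeKind.leaf → children v = ∅
  internal_nonempty : ∀ v, kind v ≠ NodeKind.leaf → (children v).Nonempty
  root_no_parent : ∀ u, root ∉ children u
  leafVar : V → Fin N
  leafSign : V → Bool
  rank : V → ℕ
  rank_lt : ∀ v, ∀ u ∈ children v, rank u < rank v

namespace SPN

variable {V : Type} [Fintype V] [DecidableEq V] {N : ℕ}

/-- The value `f_v(·|w)` of every node, where `w` assigns a weight to every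
edge `(v,u)` out of a sum node and `L` gives the value of every leaf. -/
noncomputable def evalWith (S : SPN V N) (w : V × V → ℝ) (L : V → ℝ) (v : V) : ℝ :=
  match S.kind v with
  | NodeKind.leaf => L v
  | NodeKind.sum => ∑ u ∈ (S.children v).attach, w (v, u.1) * S.evalWith w L u.1
  | NodeKind.prod => ∏ u ∈ (S.children v).attach, S.evalWith w L u.1
termination_by S.rank v
decreasing_by
  · exact S.rank_lt v u.1 u.2
  · exact S.rank_lt v u.1 u.2

/-- The leaf values determined by an input `x ∈ {0,1}^N`: the leaf over
variable `X_n` is the indicator `I[x_n = leafSign]`. -/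
def ind (S : SPN V N) (x : Fin N → Bool) (v : V) : ℝ :=
  if x (S.leafVar v) = S.leafSign v then 1 else 0

/-- The scope of a node: its variable at a leaf, the union of the scopes of
the children at an internal node. -/
noncomputable def scope (S : SPN V N) (v : V) : Finset (Fin N) :=
  match S.kind v with
  | NodeKind.leaf => {S.leafVar v}
  | NodeKind.sum => (S.children v).attach.sup fun u => S.scope u.1
  | NodeKind.prod => (S.children v).attach.sup fun u => S.scope u.1
termination_by S.rank v
decreasing_by
  · exact S.rank_lt v u.1 u.2
  · exact S.rank_lt v u.1 u.2

/-- An SPN is complete if all children of every sum node have the same scope. -/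
def Complete (S : SPN V N) : Prop :=
  ∀ v, S.kind v = NodeKind.sum →
    ∀ u₁ ∈ S.children v, ∀ u₂ ∈ S.children v, S.scope u₁ = S.scope u₂

/-- An SPN is decomposable if the children of every product node have
pairwise disjoint scopes. -/
def Decomposable (S : SPN V N) : Prop :=
  ∀ v, S.kind v = NodeKind.prod →
    ∀ u₁ ∈ S.children v, ∀ u₂ ∈ S.children v, u₁ ≠ u₂ →
      Disjoint (S.scope u₁) (S.scope u₂)

/-- `(TV, TE)` is an induced SPN (induced tree) of `S`: a subgraph of `S`,
generated from the root, containing exactly one child of every sum node it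
contains and all children of every product node it contains, together with
the corresponding edges. -/
structure IsInducedTree (S : SPN V N) (TV : Finset V) (TE : Finset (V × V)) : Prop where
  root_mem : S.root ∈ TV
  edges_sub : ∀ e ∈ TE, e.1 ∈ TV ∧ e.2 ∈ TV ∧ e.2 ∈ S.children e.1
  reach : ∀ v ∈ TV, v ≠ S.root → ∃ u, (u, v) ∈ TE
  sum_unique : ∀ v ∈ TV, S.kind v = NodeKind.sum → ∃! u, u ∈ S.children v ∧ u ∈ TV
  sum_edge : ∀ v ∈ TV, S.kind v = NodeKind.sum → ∀ u ∈ S.children v, u ∈ TV → (v, u) ∈ TE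
  prod_mem : ∀ v ∈ TV, S.kind v = NodeKind.prod → ∀ u ∈ S.children v, u ∈ TV
  prod_edge : ∀ v ∈ TV, S.kind v = NodeKind.prod → ∀ u ∈ S.children v, (v, u) ∈ TE

end SPN

namespace SPN

variable {V : Type} [Fintype V] [DecidableEq V] {N : ℕ}

/-- Nodes of the induced subtree (w.r.t. edge set `TE`) below `v`. -/
def desc (S : SPN V N) (TE : Finset (V × V)) (v : V) : Finset V :=
  insert v (((S.children v).filter (fun u => (v, u) ∈ TE)).attach.biUnion
    (fun u => S.desc TE u.1))
termination_by S.rank v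
decreasing_by
  exact S.rank_lt v u.1 (Finset.mem_of_mem_filter _ u.2)

/-- Edges of the induced subtree below `v`. -/
def tedges (S : SPN V N) (TE : Finset (V × V)) (v : V) : Finset (V × V) :=
  (((S.children v).filter (fun u => (v, u) ∈ TE)).image (fun u => (v, u))) ∪
  ((S.children v).filter (fun u => (v, u) ∈ TE)).attach.biUnion
    (fun u => S.tedges TE u.1)
termination_by S.rank v
decreasing_by
  exact S.rank_lt v u.1 (Finset.mem_of_mem_filter _ u.2)

lemma mem_desc_iff (S : SPN V N) (TE : Finset (V × V)) (v a : V) :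
    a ∈ S.desc TE v ↔ a = v ∨
      ∃ u ∈ (S.children v).filter (fun u => (v, u) ∈ TE), a ∈ S.desc TE u := by
  rw [desc]
  simp [Finset.mem_biUnion]

lemma mem_tedges_iff (S : SPN V N) (TE : Finset (V × V)) (v : V) (e : V × V) :
    e ∈ S.tedges TE v ↔
      (∃ u ∈ (S.children v).filter (fun u => (v, u) ∈ TE), e = (v, u)) ∨
      ∃ u ∈ (S.children v).filter (fun u => (v, u) ∈ TE), e ∈ S.tedges TE u := by
  rw [tedges]
  simp [Finset.mem_biUnion, eq_comm]

/-- Strong induction along `children`. -/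
lemma rank_ind (S : SPN V N) {P : V → Prop}
    (h : ∀ v, (∀ u ∈ S.children v, P u) → P v) : ∀ v, P v := by
  have H : ∀ n v, S.rank v < n → P v := by
    intro n
    induction n with
    | zero => intro v hv; omega
    | succ n ih =>
      intro v hv
      exact h v (fun u hu => ih u (by have := S.rank_lt v u hu; omega))
  exact fun v => H (S.rank v + 1) v (Nat.lt_succ_self _)

lemma mem_desc_self (S : SPN V N) (TE : Finset (V × V)) (v : V) :
    v ∈ S.desc TE v := by
  rw [mem_desc_iff]; exact Or.inl rfl

lemma rank_le_of_mem_desc (S : SPN V N) (TE : Finset (V × V)) :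
    ∀ v, ∀ a ∈ S.desc TE v, S.rank a ≤ S.rank v := by
  refine S.rank_ind (fun v ih a ha => ?_)
  rw [mem_desc_iff] at ha
  rcases ha with rfl | ⟨u, hu, ha⟩
  · exact le_rfl
  · have hu' := Finset.mem_of_mem_filter _ hu
    exact le_of_lt (lt_of_le_of_lt (ih u hu' a ha) (S.rank_lt v u hu'))

lemma scope_nonempty (S : SPN V N) : ∀ v, (S.scope v).Nonempty := by
  refine S.rank_ind (fun v ih => ?_)
  rw [scope]
  rcases hk : S.kind v with _ | _ | _ <;> simp only []
  · have hne := S.internal_nonempty v (by simp [hk])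
    obtain ⟨u, hu⟩ := hne
    obtain ⟨n, hn⟩ := ih u hu
    exact ⟨n, Finset.mem_sup.mpr ⟨⟨u, hu⟩, Finset.mem_attach _ _, hn⟩⟩
  · have hne := S.internal_nonempty v (by simp [hk])
    obtain ⟨u, hu⟩ := hne
    obtain ⟨n, hn⟩ := ih u hu
    exact ⟨n, Finset.mem_sup.mpr ⟨⟨u, hu⟩, Finset.mem_attach _ _, hn⟩⟩
  · exact ⟨S.leafVar v, Finset.mem_singleton_self _⟩

end SPN
namespace SPN

variable {V : Type} [Fintype V] [DecidableEq V] {N : ℕ}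

lemma scope_leaf (S : SPN V N) {v : V} (h : S.kind v = NodeKind.leaf) :
    S.scope v = {S.leafVar v} := by
  rw [scope, h]

lemma scope_internal (S : SPN V N) {v : V} (h : S.kind v ≠ NodeKind.leaf) :
    S.scope v = (S.children v).sup S.scope := by
  rcases hk : S.kind v with _ | _ | _
  · rw [scope, hk, Finset.sup_attach]
  · rw [scope, hk, Finset.sup_attach]
  · exact absurd hk h

lemma scope_child_subset (S : SPN V N) {v u : V} (hu : u ∈ S.children v) :
    S.scope u ⊆ S.scope v := by
  have hk : S.kind v ≠ NodeKind.leaf := by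
    intro h
    rw [S.leaf_children v h] at hu
    exact absurd hu (Finset.notMem_empty u)
  rw [S.scope_internal hk]
  exact Finset.le_sup (f := S.scope) hu

lemma scope_subset_of_mem_desc (S : SPN V N) (TE : Finset (V × V)) :
    ∀ v, ∀ a ∈ S.desc TE v, S.scope a ⊆ S.scope v := by
  refine S.rank_ind (fun v ih a ha => ?_)
  rw [mem_desc_iff] at ha
  rcases ha with rfl | ⟨u, hu, ha⟩
  · exact subset_rfl
  · have hu' := Finset.mem_of_mem_filter _ hu
    exact (ih u hu' a ha).trans (S.scope_child_subset hu')

lemma desc_subset_of_mem (S : SPN V N) (TE : Finset (V × V)) :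
    ∀ v, ∀ a ∈ S.desc TE v, S.desc TE a ⊆ S.desc TE v := by
  refine S.rank_ind (fun v ih a ha => ?_)
  rw [mem_desc_iff] at ha
  rcases ha with rfl | ⟨u, hu, ha⟩
  · exact subset_rfl
  · intro b hb
    rw [mem_desc_iff]
    exact Or.inr ⟨u, hu, ih u (Finset.mem_of_mem_filter _ hu) a ha hb⟩

lemma tedges_subset_of_mem (S : SPN V N) (TE : Finset (V × V)) :
    ∀ v, ∀ a ∈ S.desc TE v, S.tedges TE a ⊆ S.tedges TE v := by
  refine S.rank_ind (fun v ih a ha => ?_)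
  rw [mem_desc_iff] at ha
  rcases ha with rfl | ⟨u, hu, ha⟩
  · exact subset_rfl
  · intro e he
    rw [mem_tedges_iff]
    exact Or.inr ⟨u, hu, ih u (Finset.mem_of_mem_filter _ hu) a ha he⟩

lemma fst_mem_desc_of_mem_tedges (S : SPN V N) (TE : Finset (V × V)) :
    ∀ v, ∀ e ∈ S.tedges TE v, e.1 ∈ S.desc TE v := by
  refine S.rank_ind (fun v ih e he => ?_)
  rw [mem_tedges_iff] at he
  rcases he with ⟨u, hu, rfl⟩ | ⟨u, hu, he⟩
  · exact S.mem_desc_self TE v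
  · rw [mem_desc_iff]
    exact Or.inr ⟨u, hu, ih u (Finset.mem_of_mem_filter _ hu) e he⟩

lemma mem_desc_of_edge (S : SPN V N) (TE : Finset (V × V)) {a b v : V}
    (ha : a ∈ S.desc TE v) (he : (a, b) ∈ TE) (hb : b ∈ S.children a) :
    b ∈ S.desc TE v := by
  refine S.desc_subset_of_mem TE v a ha ?_
  rw [mem_desc_iff]
  exact Or.inr ⟨b, Finset.mem_filter.mpr ⟨hb, he⟩, S.mem_desc_self TE b⟩

lemma mem_tedges_of_edge (S : SPN V N) (TE : Finset (V × V)) {a b v : V}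
    (ha : a ∈ S.desc TE v) (he : (a, b) ∈ TE) (hb : b ∈ S.children a) :
    (a, b) ∈ S.tedges TE v := by
  refine S.tedges_subset_of_mem TE v a ha ?_
  rw [mem_tedges_iff]
  exact Or.inl ⟨b, Finset.mem_filter.mpr ⟨hb, he⟩, rfl⟩

end SPN
namespace SPN

variable {V : Type} [Fintype V] [DecidableEq V] {N : ℕ}

lemma main_ind (S : SPN V N) (hC : S.Complete) (hD : S.Decomposable)
    (TV : Finset V) (TE : Finset (V × V)) (hT : S.IsInducedTree TV TE)
    (w : V × V → ℝ) (x : Fin N → Bool) (fT : V → ℝ)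
    (hleaf : ∀ v ∈ TV, S.kind v = NodeKind.leaf → fT v = S.ind x v)
    (hsum : ∀ v ∈ TV, S.kind v = NodeKind.sum →
      ∀ u, (v, u) ∈ TE → fT v = w (v, u) * fT u)
    (hprod : ∀ v ∈ TV, S.kind v = NodeKind.prod →
      fT v = ∏ u ∈ S.children v, fT u) :
    ∀ v, v ∈ TV →
      S.desc TE v ⊆ TV ∧
      Set.InjOn S.leafVar ((S.desc TE v).filter (fun u => S.kind u = NodeKind.leaf)) ∧
      ((S.desc TE v).filter (fun u => S.kind u = NodeKind.leaf)).image S.leafVar = S.scope v ∧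
      S.tedges TE v ⊆ TE ∧
      fT v = (∏ e ∈ (S.tedges TE v).filter (fun e => S.kind e.1 = NodeKind.sum), w e) *
        ∏ l ∈ (S.desc TE v).filter (fun u => S.kind u = NodeKind.leaf), S.ind x l := by
  refine S.rank_ind (fun v ih hv => ?_)
  rcases hk : S.kind v with _ | _ | _
  -- sum node
  · obtain ⟨c, ⟨hcch, hcTV⟩, hcu⟩ := hT.sum_unique v hv hk
    have hce : (v, c) ∈ TE := hT.sum_edge v hv hk c hcch hcTV
    have hFc : (S.children v).filter (fun u => (v, u) ∈ TE) = {c} := by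
      ext u
      simp only [Finset.mem_filter, Finset.mem_singleton]
      constructor
      · rintro ⟨h1, h2⟩; exact hcu u ⟨h1, (hT.edges_sub _ h2).2.1⟩
      · rintro rfl; exact ⟨hcch, hce⟩
    have hdesc : S.desc TE v = insert v (S.desc TE c) := by
      ext a; rw [mem_desc_iff, hFc]; simp
    have hted : S.tedges TE v = insert (v, c) (S.tedges TE c) := by
      ext e; rw [mem_tedges_iff, hFc]; simp
    have hvnd : v ∉ S.desc TE c := fun h =>
      absurd (S.rank_le_of_mem_desc TE c v h) (not_le.mpr (S.rank_lt v c hcch))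
    have hent : (v, c) ∉ S.tedges TE c := fun h =>
      hvnd (S.fst_mem_desc_of_mem_tedges TE c _ h)
    obtain ⟨ihsub, ihinj, ihim, ihe, ihval⟩ := ih c hcch hcTV
    have hscope : S.scope v = S.scope c := by
      rw [S.scope_internal (by simp [hk])]
      rw [Finset.sup_congr rfl (fun u hu => hC v hk u hu c hcch)]
      exact Finset.sup_const (S.internal_nonempty v (by simp [hk])) _
    have hlf : (S.desc TE v).filter (fun u => S.kind u = NodeKind.leaf)
        = (S.desc TE c).filter (fun u => S.kind u = NodeKind.leaf) := by
      rw [hdesc, Finset.filter_insert, if_neg (by simp [hk])]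
    refine ⟨?_, ?_, ?_, ?_, ?_⟩
    · rw [hdesc]; exact Finset.insert_subset hv ihsub
    · rw [hlf]; exact ihinj
    · rw [hlf, ihim, hscope]
    · rw [hted]; exact Finset.insert_subset hce ihe
    · have hfil : (S.tedges TE v).filter (fun e => S.kind e.1 = NodeKind.sum)
          = insert (v, c) ((S.tedges TE c).filter (fun e => S.kind e.1 = NodeKind.sum)) := by
        rw [hted, Finset.filter_insert, if_pos hk]
      rw [hfil, Finset.prod_insert (fun h => hent (Finset.mem_of_mem_filter _ h)), hlf,
        hsum v hv hk c hce, ihval]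
      ring
  -- product node
  · have hFall : (S.children v).filter (fun u => (v, u) ∈ TE) = S.children v :=
      Finset.filter_true_of_mem (fun u hu => hT.prod_edge v hv hk u hu)
    have hdesc : S.desc TE v = insert v ((S.children v).biUnion (S.desc TE)) := by
      ext a; rw [mem_desc_iff, hFall]; simp [Finset.mem_biUnion]
    have hted : S.tedges TE v = ((S.children v).image (fun u => (v, u))) ∪
        (S.children v).biUnion (S.tedges TE) := by
      ext e; rw [mem_tedges_iff, hFall]
      simp [Finset.mem_biUnion, eq_comm]
    have hchTV : ∀ u ∈ S.children v, u ∈ TV := hT.prod_mem v hv hk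
    have hvnd : ∀ u ∈ S.children v, v ∉ S.desc TE u := fun u hu h =>
      absurd (S.rank_le_of_mem_desc TE u v h) (not_le.mpr (S.rank_lt v u hu))
    have hdisj : ∀ u₁ ∈ S.children v, ∀ u₂ ∈ S.children v, u₁ ≠ u₂ →
        Disjoint (S.desc TE u₁) (S.desc TE u₂) := by
      intro u₁ h₁ u₂ h₂ hne
      rw [Finset.disjoint_left]
      intro a ha1 ha2
      obtain ⟨n, hn⟩ := S.scope_nonempty a
      exact Finset.disjoint_left.mp (hD v hk u₁ h₁ u₂ h₂ hne)
        (S.scope_subset_of_mem_desc TE u₁ a ha1 hn)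
        (S.scope_subset_of_mem_desc TE u₂ a ha2 hn)
    have hdisjE : Set.PairwiseDisjoint (↑(S.children v)) (S.tedges TE) := by
      intro u₁ h₁ u₂ h₂ hne
      refine Finset.disjoint_left.mpr fun {e} he1 he2 => ?_
      exact Finset.disjoint_left.mp
        (hdisj u₁ (Finset.mem_coe.mp h₁) u₂ (Finset.mem_coe.mp h₂) hne)
        (S.fst_mem_desc_of_mem_tedges TE u₁ e he1)
        (S.fst_mem_desc_of_mem_tedges TE u₂ e he2)
    have hdisjL : Set.PairwiseDisjoint (↑(S.children v))
        (fun u => (S.desc TE u).filter (fun a => S.kind a = NodeKind.leaf)) := by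
      intro u₁ h₁ u₂ h₂ hne
      exact Finset.disjoint_filter_filter
        (hdisj u₁ (Finset.mem_coe.mp h₁) u₂ (Finset.mem_coe.mp h₂) hne)
    have hlf : (S.desc TE v).filter (fun u => S.kind u = NodeKind.leaf)
        = (S.children v).biUnion
            (fun u => (S.desc TE u).filter (fun a => S.kind a = NodeKind.leaf)) := by
      rw [hdesc, Finset.filter_insert, if_neg (by simp [hk]), Finset.filter_biUnion]
    have hscope : S.scope v = (S.children v).sup S.scope :=
      S.scope_internal (by simp [hk])
    refine ⟨?_, ?_, ?_, ?_, ?_⟩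
    · rw [hdesc]
      refine Finset.insert_subset hv (Finset.biUnion_subset.mpr (fun u hu => ?_))
      exact (ih u hu (hchTV u hu)).1
    · rw [hlf]
      intro a ha b hb heq
      rw [Finset.mem_coe, Finset.mem_biUnion] at ha hb
      obtain ⟨u₁, h₁, ha⟩ := ha
      obtain ⟨u₂, h₂, hb⟩ := hb
      by_cases hne : u₁ = u₂
      · subst hne
        exact (ih u₁ h₁ (hchTV u₁ h₁)).2.1 (Finset.mem_coe.mpr ha) (Finset.mem_coe.mpr hb) heq
      · exfalso
        have hima : S.leafVar a ∈ S.scope u₁ := by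
          rw [← (ih u₁ h₁ (hchTV u₁ h₁)).2.2.1]
          exact Finset.mem_image_of_mem _ ha
        have himb : S.leafVar b ∈ S.scope u₂ := by
          rw [← (ih u₂ h₂ (hchTV u₂ h₂)).2.2.1]
          exact Finset.mem_image_of_mem _ hb
        rw [heq] at hima
        exact Finset.disjoint_left.mp (hD v hk u₁ h₁ u₂ h₂ hne) hima himb
    · rw [hlf, Finset.biUnion_image, hscope, Finset.sup_eq_biUnion]
      exact Finset.biUnion_congr rfl (fun u hu => (ih u hu (hchTV u hu)).2.2.1)
    · rw [hted]
      refine Finset.union_subset ?_ (Finset.biUnion_subset.mpr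
        (fun u hu => (ih u hu (hchTV u hu)).2.2.2.1))
      intro e he
      obtain ⟨u, hu, rfl⟩ := Finset.mem_image.mp he
      exact hT.prod_edge v hv hk u hu
    · have hfil : (S.tedges TE v).filter (fun e => S.kind e.1 = NodeKind.sum)
          = (S.children v).biUnion
              (fun u => (S.tedges TE u).filter (fun e => S.kind e.1 = NodeKind.sum)) := by
        rw [hted, Finset.filter_union, Finset.filter_biUnion]
        have : ((S.children v).image (fun u => (v, u))).filter
            (fun e => S.kind e.1 = NodeKind.sum) = ∅ := by
          refine Finset.filter_false_of_mem (fun e he => ?_)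
          obtain ⟨u, hu, rfl⟩ := Finset.mem_image.mp he
          simp [hk]
        rw [this, Finset.empty_union]
      rw [hfil, hlf, hprod v hv hk,
        Finset.prod_biUnion (fun u₁ h₁ u₂ h₂ hne =>
          Finset.disjoint_filter_filter (hdisjE h₁ h₂ hne)),
        Finset.prod_biUnion hdisjL, ← Finset.prod_mul_distrib]
      exact Finset.prod_congr rfl (fun u hu => (ih u hu (hchTV u hu)).2.2.2.2)
  -- leaf node
  · have hF0 : (S.children v).filter (fun u => (v, u) ∈ TE) = ∅ := by
      rw [S.leaf_children v hk, Finset.filter_empty]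
    have hdesc : S.desc TE v = {v} := by
      ext a; rw [mem_desc_iff, hF0]; simp
    have hted : S.tedges TE v = ∅ := by
      ext e; rw [mem_tedges_iff, hF0]; simp
    have hlf : (S.desc TE v).filter (fun u => S.kind u = NodeKind.leaf) = {v} := by
      rw [hdesc, Finset.filter_singleton, if_pos hk]
    refine ⟨?_, ?_, ?_, ?_, ?_⟩
    · rw [hdesc]; simpa using hv
    · rw [hlf]; simp [Set.InjOn]
    · rw [hlf, S.scope_leaf hk, Finset.image_singleton]
    · rw [hted]; exact Finset.empty_subset _
    · rw [hted, hlf, Finset.filter_empty, Finset.prod_empty, Finset.prod_singleton,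
        hleaf v hv hk, one_mul]

end SPN
namespace SPN

variable {V : Type} [Fintype V] [DecidableEq V] {N : ℕ}

lemma subset_desc_root (S : SPN V N) (TV : Finset V) (TE : Finset (V × V))
    (hT : S.IsInducedTree TV TE) : TV ⊆ S.desc TE S.root := by
  set M := Finset.univ.sup S.rank with hM
  have hub : ∀ v : V, S.rank v ≤ M := fun v => Finset.le_sup (Finset.mem_univ v)
  have H : ∀ k, ∀ v ∈ TV, M - S.rank v ≤ k → v ∈ S.desc TE S.root := by
    intro k
    induction k with
    | zero =>
      intro v hv hk
      by_cases hr : v = S.root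
      · subst hr; exact S.mem_desc_self TE _
      · obtain ⟨u, hu⟩ := hT.reach v hv hr
        obtain ⟨huTV, hvTV, hch⟩ := hT.edges_sub _ hu
        have h1 := S.rank_lt u v hch
        have h2 := hub u
        omega
    | succ k ih =>
      intro v hv hk
      by_cases hr : v = S.root
      · subst hr; exact S.mem_desc_self TE _
      · obtain ⟨u, hu⟩ := hT.reach v hv hr
        obtain ⟨huTV, hvTV, hch⟩ := hT.edges_sub _ hu
        have h1 := S.rank_lt u v hch
        have h2 := hub u
        have hu' : u ∈ S.desc TE S.root := ih u huTV (by omega)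
        exact S.mem_desc_of_edge TE hu' hu hch
  exact fun v hv => H (M - S.rank v) v hv le_rfl

end SPN


/-- If `T = (TV, TE)` is an induced SPN of a complete and
decomposable SPN `S` over Boolean variables `X_1, …, X_N` whose root has scope
`{X_1, …, X_N}`, then for every input `x ∈ {0,1}^N` the value computed by `T`
(any function `fT` satisfying the evaluation recursion restricted to `T`)
equals the product of the weights of the sum-emanating edges of `T` times the
product over `n = 1, …, N` of the value of the unique indicator over `X_n`
appearing among the leaves of `T`. -/
theorem induced_tree_value_is_monomial
    {V : Type} [Fintype V] [DecidableEq V] {N : ℕ} (S : SPN V N)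
    (hC : S.Complete) (hD : S.Decomposable)
    (hroot : S.scope S.root = Finset.univ)
    (TV : Finset V) (TE : Finset (V × V)) (hT : S.IsInducedTree TV TE)
    (w : V × V → ℝ) (hw : ∀ e, 0 < w e)
    (x : Fin N → Bool)
    (fT : V → ℝ)
    (hleaf : ∀ v ∈ TV, S.kind v = NodeKind.leaf → fT v = S.ind x v)
    (hsum : ∀ v ∈ TV, S.kind v = NodeKind.sum →
      ∀ u, (v, u) ∈ TE → fT v = w (v, u) * fT u)
    (hprod : ∀ v ∈ TV, S.kind v = NodeKind.prod →
      fT v = ∏ u ∈ S.children v, fT u) :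
    ∃ ℓ : Fin N → V,
      -- `ℓ n` is the unique indicator leaf over `X_n` appearing in `T`
      (∀ n, ℓ n ∈ TV ∧ S.kind (ℓ n) = NodeKind.leaf ∧ S.leafVar (ℓ n) = n) ∧
      (∀ v ∈ TV, S.kind v = NodeKind.leaf → v = ℓ (S.leafVar v)) ∧
      fT S.root =
        (∏ e ∈ TE.filter (fun e => S.kind e.1 = NodeKind.sum), w e) *
          ∏ n : Fin N, S.ind x (ℓ n) := by
  obtain ⟨hsub, hinj, him, hte, hval⟩ :=
    S.main_ind hC hD TV TE hT w x fT hleaf hsum hprod S.root hT.root_mem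
  have hTVeq : S.desc TE S.root = TV :=
    le_antisymm hsub (S.subset_desc_root TV TE hT)
  have hTEeq : S.tedges TE S.root = TE := by
    refine le_antisymm hte (fun e he => ?_)
    obtain ⟨h1, h2, h3⟩ := hT.edges_sub e he
    have h1' : e.1 ∈ S.desc TE S.root := by rw [hTVeq]; exact h1
    rcases e with ⟨a, b⟩
    exact S.mem_tedges_of_edge TE h1' he h3
  rw [hTVeq] at hinj him hval
  rw [hTEeq] at hval
  set Lf := TV.filter (fun u => S.kind u = NodeKind.leaf) with hLf
  have hex : ∀ n : Fin N, ∃ l ∈ Lf, S.leafVar l = n := by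
    intro n
    have : n ∈ Lf.image S.leafVar := by rw [him, hroot]; exact Finset.mem_univ n
    exact Finset.mem_image.mp this
  choose ℓ hmem hvar using hex
  have huniq : ∀ v ∈ TV, S.kind v = NodeKind.leaf → v = ℓ (S.leafVar v) := by
    intro v hv hkv
    have hvL : v ∈ Lf := Finset.mem_filter.mpr ⟨hv, hkv⟩
    exact hinj (Finset.mem_coe.mpr hvL) (Finset.mem_coe.mpr (hmem (S.leafVar v)))
      (by rw [hvar])
  refine ⟨ℓ, ?_, huniq, ?_⟩
  · intro n
    obtain ⟨h1, h2⟩ := Finset.mem_filter.mp (hmem n)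
    exact ⟨h1, h2, hvar n⟩
  · rw [hval]
    congr 1
    have hprodim : ∏ n ∈ Lf.image S.leafVar, S.ind x (ℓ n)
        = ∏ l ∈ Lf, S.ind x (ℓ (S.leafVar l)) :=
      Finset.prod_image (fun a ha b hb hab =>
        hinj (Finset.mem_coe.mpr ha) (Finset.mem_coe.mpr hb) hab)
    rw [show (Finset.univ : Finset (Fin N)) = Lf.image S.leafVar by rw [him, hroot],
      hprodim]
    refine Finset.prod_congr rfl (fun l hl => ?_)
    obtain ⟨h1, h2⟩ := Finset.mem_filter.mp hl
    rw [← huniq l h1 h2]
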